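/- Let H1 be a hypergraph, let C_r be an [M_r]-component of H1, and let M_s ⊆ Fr(C_r). Then every [M_s]-component C of H1 such that C_r ∪ C is [M_r ∩ M_s]-connected satisfies C ⊆ C_r if, and only if, (M_r ∩ Fr(C_r)) \ M_s = ∅. -/

import Mathlib

/-! Common definitions: hypergraphs, components, the Robber and Captain game,
the Robber and Marshal game, tree projections, (generalized) hypertree decompositions. -/

variable {α : Type} [DecidableEq α]

/-- A hypergraph: a finite set of nodes and a finite set of hyperedges, each a subset of the
nodes, such that every node occurs in some hyperedge. -/
structure FinHypergraph (α : Type) [DecidableEq α] where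
  nodes : Finset α
  edges : Finset (Finset α)
  edge_sub : ∀ h ∈ edges, h ⊆ nodes
  cover : ∀ x ∈ nodes, ∃ h ∈ edges, x ∈ h

namespace FinHypergraph

/-- `X` and `Y` are `[M]`-adjacent: some hyperedge `h` satisfies `{X,Y} ⊆ h \ M`. -/
def MAdj (H : FinHypergraph α) (M : Finset α) (X Y : α) : Prop :=
  ∃ h ∈ H.edges, X ∈ h ∧ Y ∈ h ∧ X ∉ M ∧ Y ∉ M

/-- An `[M]`-path: a sequence of consecutively `[M]`-adjacent nodes. -/
def MPath (H : FinHypergraph α) (M : Finset α) : α → α → Prop :=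
  Relation.ReflTransGen (H.MAdj M)

/-- `W` is `[M]`-connected: every two nodes of `W` are joined by an `[M]`-path. -/
def MConn (H : FinHypergraph α) (M W : Finset α) : Prop :=
  ∀ X ∈ W, ∀ Y ∈ W, H.MPath M X Y

/-- `C` is an `[M]`-component: a maximal `[M]`-connected nonempty subset of `nodes(H) \ M`. -/
def MComp (H : FinHypergraph α) (M C : Finset α) : Prop :=
  C.Nonempty ∧ C ⊆ H.nodes \ M ∧ H.MConn M C ∧
    ∀ C' : Finset α, C ⊆ C' → C' ⊆ H.nodes \ M → H.MConn M C' → C' = C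

/-- The frontier `Fr(C)`: the union of all hyperedges of `H` meeting `C`. -/
def Fr (H : FinHypergraph α) (C : Finset α) : Finset α :=
  (H.edges.filter fun h => (h ∩ C).Nonempty).sup id

/-- The border `∂C = Fr(C) \ C`. -/
def border (H : FinHypergraph α) (C : Finset α) : Finset α := H.Fr C \ C

/-- `H1 ≤ H2`: every hyperedge of `H1` is contained in some hyperedge of `H2`. -/
def HLE (H1 H2 : FinHypergraph α) : Prop := ∀ h ∈ H1.edges, ∃ h' ∈ H2.edges, h ⊆ h'

/-- `H` is acyclic iff it has a join tree: a tree on the hyperedges of `H` such that, for every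
node `X`, the set of hyperedges containing `X` induces a connected subtree. -/
def IsAcyclicHG (H : FinHypergraph α) : Prop :=
  ∃ T : SimpleGraph {h : Finset α // h ∈ H.edges},
    T.IsTree ∧ ∀ X ∈ H.nodes,
      (T.induce {e : {h : Finset α // h ∈ H.edges} | X ∈ e.1}).Connected

/-- `H^k`: the hypergraph over the same nodes whose hyperedges are all unions of at most `k`
(and at least one) hyperedges of `H`. -/
def pow (H : FinHypergraph α) (k : ℕ) (hk : 1 ≤ k) : FinHypergraph α where
  nodes := H.nodes
  edges := (H.edges.powerset.filter fun S => S.Nonempty ∧ S.card ≤ k).image fun S => S.sup id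
  edge_sub := by
    intro h hh
    simp only [Finset.mem_image, Finset.mem_filter, Finset.mem_powerset] at hh
    obtain ⟨S, ⟨hS, _, _⟩, rfl⟩ := hh
    exact Finset.sup_le fun i hi => H.edge_sub i (hS hi)
  cover := by
    intro x hx
    obtain ⟨h, hh, hxh⟩ := H.cover x hx
    refine ⟨h, ?_, hxh⟩
    simp only [Finset.mem_image, Finset.mem_filter, Finset.mem_powerset]
    exact ⟨{h}, ⟨Finset.singleton_subset_iff.mpr hh, Finset.singleton_nonempty h,
      by simpa using hk⟩, by simp⟩

/-- The simplicial version of `H`: same nodes, and hyperedges all nonempty subsets of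
hyperedges of `H`. -/
def simplicial (H : FinHypergraph α) : FinHypergraph α where
  nodes := H.nodes
  edges := (H.edges.biUnion Finset.powerset).filter fun s => s.Nonempty
  edge_sub := by
    intro h hh
    simp only [Finset.mem_filter, Finset.mem_biUnion, Finset.mem_powerset] at hh
    obtain ⟨⟨e, he, hsub⟩, -⟩ := hh
    exact hsub.trans (H.edge_sub e he)
  cover := by
    intro x hx
    obtain ⟨h, hh, hxh⟩ := H.cover x hx
    refine ⟨h, ?_, hxh⟩
    simp only [Finset.mem_filter, Finset.mem_biUnion, Finset.mem_powerset]
    exact ⟨⟨h, hh, le_refl _⟩, ⟨x, hxh⟩⟩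

end FinHypergraph

/-- A tree projection of `H1` with respect to `H2`: an acyclic hypergraph `Ha` over the nodes
of `H1` with `H1 ≤ Ha ≤ H2`. -/
def IsTreeProjection (Ha H1 H2 : FinHypergraph α) : Prop :=
  Ha.nodes = H1.nodes ∧ Ha.IsAcyclicHG ∧ FinHypergraph.HLE H1 Ha ∧ FinHypergraph.HLE Ha H2

def HasTreeProjection (H1 H2 : FinHypergraph α) : Prop := ∃ Ha, IsTreeProjection Ha H1 H2

/-! ### The Robber and Captain game -/

/-- A configuration `(h, M, C)`. -/
abbrev Config (α : Type) := Finset α × Finset α × Finset α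

/-- The initial configuration `(∅, ∅, nodes(H1))`. -/
def initConfig (H1 : FinHypergraph α) : Config α := (∅, ∅, H1.nodes)

/-- `Cr` is a `[v, Mr]`-option: an `[Mr]`-component `Cr` of `H1` such that `C ∪ Cr` is
`[M ∩ Mr]`-connected, where `v = (h, M, C)`. -/
def IsOption (H1 : FinHypergraph α) (v : Config α) (Mr Cr : Finset α) : Prop :=
  H1.MComp Mr Cr ∧ H1.MConn (v.2.1 ∩ Mr) (v.2.2 ∪ Cr)

/-- The successor relation of the strategy graph (arcs from a configuration in the domain to the
configurations resulting from the Captain's move and the Robber's choice of an option). -/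
def StratSucc (H1 : FinHypergraph α) (dom : Set (Config α))
    (mv : Config α → Finset α × Finset α) (a b : Config α) : Prop :=
  a ∈ dom ∧ b.1 = (mv a).1 ∧ b.2.1 = (mv a).2 ∧ IsOption H1 a (mv a).2 b.2.2

/-- A strategy for the Captain in the Robber and Captain game on `(H1, H2)`. -/
structure Strategy (H1 H2 : FinHypergraph α) where
  dom : Set (Config α)
  move : Config α → Finset α × Finset α
  init_mem : initConfig H1 ∈ dom
  valid : ∀ v ∈ dom, v = initConfig H1 ∨
    (v.1 ∈ H2.edges ∧ v.2.1 ⊆ v.1 ∧ H1.MComp v.2.1 v.2.2)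
  move_edge : ∀ v ∈ dom, (move v).1 ∈ H2.edges
  move_sub : ∀ v ∈ dom, (move v).2 ⊆ (move v).1 ∩ H1.Fr v.2.2
  closed : ∀ v ∈ dom, ∀ Cr : Finset α,
    IsOption H1 v (move v).2 Cr → ((move v).1, (move v).2, Cr) ∈ dom
  reach : ∀ v ∈ dom, Relation.ReflTransGen (StratSucc H1 dom move) (initConfig H1) v

namespace Strategy

variable {H1 H2 : FinHypergraph α}

/-- The arc relation of the strategy graph `G(σ)`. -/
def Succ (σ : Strategy H1 H2) : Config α → Config α → Prop :=
  StratSucc H1 σ.dom σ.move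

/-- `σ` is winning iff its strategy graph is acyclic. -/
def Winning (σ : Strategy H1 H2) : Prop :=
  ∀ v : Config α, ¬ Relation.TransGen σ.Succ v v

/-- `σ` is monotone: every move is monotone, i.e. every option shrinks the component. -/
def IsMonotone (σ : Strategy H1 H2) : Prop :=
  ∀ v ∈ σ.dom, ∀ Cr : Finset α, IsOption H1 v (σ.move v).2 Cr → Cr ⊆ v.2.2

/-- `σ` is greedy: at `v = (h_p, M_p, C_p)` the move `(h_r, M_r)` satisfies
`M_r = h_r ∩ Fr(C_p)`, with `h_r = h_p` whenever `h_p ∩ C_p ≠ ∅` (otherwise `h_r` is an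
arbitrary hyperedge of `H2`, which is guaranteed by `move_edge`). -/
def Greedy (σ : Strategy H1 H2) : Prop :=
  ∀ v ∈ σ.dom, (σ.move v).2 = (σ.move v).1 ∩ H1.Fr v.2.2 ∧
    ((v.1 ∩ v.2.2).Nonempty → (σ.move v).1 = v.1)

/-- `σ` is nice: `σ(h_p, M_p, C_p) = (h_p, ∂C_p)` whenever `∂C_p ⊂ M_p`. -/
def Nice (σ : Strategy H1 H2) : Prop :=
  ∀ v ∈ σ.dom, H1.border v.2.2 ⊂ v.2.1 → σ.move v = (v.1, H1.border v.2.2)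

end Strategy

/-! ### The Robber and Marshal game -/

/-- A configuration `(h, C)` of the Robber and Marshal game. -/
abbrev MConfig (α : Type) := Finset α × Finset α

/-- The Robber's options in the Robber and Marshal game: `Cr` is an `[hr]`-component such that
`C ∪ Cr` is `[h ∩ hr]`-connected, where `v = (h, C)`. -/
def MarshalOption (H1 : FinHypergraph α) (v : MConfig α) (hr Cr : Finset α) : Prop :=
  H1.MComp hr Cr ∧ H1.MConn (v.1 ∩ hr) (v.2 ∪ Cr)

/-- The successor relation of the Robber and Marshal game under a given Marshal strategy. -/
def MarSucc (H1 : FinHypergraph α) (dom : Set (MConfig α)) (mv : MConfig α → Finset α)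
    (a b : MConfig α) : Prop :=
  a ∈ dom ∧ ¬ a.2 ⊆ a.1 ∧ b.1 = mv a ∧
    (MarshalOption H1 a (mv a) b.2 ∨
      ((¬ ∃ Cr : Finset α, MarshalOption H1 a (mv a) Cr) ∧ b.2 = ∅))

/-- A strategy for the Marshal in the Robber and Marshal game on `(H1, H2)`.
A configuration `(h, C)` with `C ⊆ h` is a capture configuration; at any other configuration of
the domain the Marshal moves to a hyperedge of `H2`. -/
structure MarshalStrategy (H1 H2 : FinHypergraph α) where
  dom : Set (MConfig α)
  move : MConfig α → Finset α
  init_mem : (∅, H1.nodes) ∈ dom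
  valid : ∀ v ∈ dom, v = ((∅ : Finset α), H1.nodes) ∨
    (v.1 ∈ H2.edges ∧ (H1.MComp v.1 v.2 ∨ v.2 = ∅))
  move_edge : ∀ v ∈ dom, ¬ v.2 ⊆ v.1 → move v ∈ H2.edges
  closed : ∀ v ∈ dom, ¬ v.2 ⊆ v.1 → ∀ Cr : Finset α,
    MarshalOption H1 v (move v) Cr → (move v, Cr) ∈ dom
  closed_cap : ∀ v ∈ dom, ¬ v.2 ⊆ v.1 →
    (¬ ∃ Cr : Finset α, MarshalOption H1 v (move v) Cr) → ((move v, ∅) : MConfig α) ∈ dom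
  reach : ∀ v ∈ dom,
    Relation.ReflTransGen (MarSucc H1 dom move) ((∅ : Finset α), H1.nodes) v

namespace MarshalStrategy

variable {H1 H2 : FinHypergraph α}

/-- The Marshal wins: starting from the initial configuration the game always ends in a capture
configuration; equivalently, the game graph of the strategy is acyclic. -/
def Winning (μ : MarshalStrategy H1 H2) : Prop :=
  ∀ v : MConfig α, ¬ Relation.TransGen (MarSucc H1 μ.dom μ.move) v v

/-- The Marshal strategy is monotone: in every move, every available component shrinks. -/
def IsMonotone (μ : MarshalStrategy H1 H2) : Prop :=
  ∀ v ∈ μ.dom, ¬ v.2 ⊆ v.1 → ∀ Cr : Finset α, MarshalOption H1 v (μ.move v) Cr → Cr ⊆ v.2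

end MarshalStrategy

/-! ### Rooted trees and (generalized) hypertree decompositions -/

/-- A finite rooted tree, encoded by a parent function on `Fin (size+1)`. -/
structure RTree where
  size : ℕ
  parent : Fin (size + 1) → Fin (size + 1)
  root : Fin (size + 1)
  parent_root : parent root = root
  reach_root : ∀ v, ∃ m : ℕ, parent^[m] v = root

namespace RTree

/-- Adjacency in the rooted tree. -/
def Adj (T : RTree) (a b : Fin (T.size + 1)) : Prop :=
  a ≠ b ∧ (T.parent a = b ∨ T.parent b = a)

/-- A set of vertices induces a connected subtree. -/
def ConnIn (T : RTree) (S : Set (Fin (T.size + 1))) : Prop :=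
  ∀ a ∈ S, ∀ b ∈ S,
    Relation.ReflTransGen (fun x y => T.Adj x y ∧ x ∈ S ∧ y ∈ S) a b

/-- `q` is a vertex of the subtree rooted at `p` (i.e. a descendant of `p`). -/
def Desc (T : RTree) (p q : Fin (T.size + 1)) : Prop :=
  ∃ m : ℕ, T.parent^[m] q = p

end RTree

/-- A generalized hypertree decomposition of `H`. -/
structure GHDec (H : FinHypergraph α) where
  T : RTree
  chi : Fin (T.size + 1) → Finset α
  lam : Fin (T.size + 1) → Finset (Finset α)
  chi_sub : ∀ p, chi p ⊆ H.nodes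
  lam_sub : ∀ p, lam p ⊆ H.edges
  edge_cover : ∀ h ∈ H.edges, ∃ p, h ⊆ chi p
  conn : ∀ Y ∈ H.nodes, T.ConnIn {p | Y ∈ chi p}
  chi_cov : ∀ p, chi p ⊆ (lam p).sup id

namespace GHDec

variable {H : FinHypergraph α}

/-- The decomposition has width at most `k`. -/
def WidthLE (D : GHDec H) (k : ℕ) : Prop := ∀ p, (D.lam p).card ≤ k

/-- Condition (4) of hypertree decompositions: for every vertex `p`, the intersection of
`⋃ λ(p)` with `⋃_{q in the subtree rooted at p} χ(q)` is contained in `χ(p)`. -/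
def IsHD (D : GHDec H) : Prop :=
  ∀ p, ∀ x ∈ (D.lam p).sup id, (∃ q, D.T.Desc p q ∧ x ∈ D.chi q) → x ∈ D.chi p

end GHDec

/-!
If some `Z ∈ M_r ∩ Fr(C_r)` avoids `M_s`, then `Z` is `[M_r ∩ M_s]`-adjacent to a node of `C_r`
(through a hyperedge witnessing `Z ∈ Fr(C_r)`), so the `[M_s]`-component of `Z` is glued to `C_r`
yet contains `Z ∉ C_r`. Conversely, if `M_r ∩ Fr(C_r) ⊆ M_s`, every `[M_r ∩ M_s]`-neighbour of a
node of `C_r` lies in `Fr(C_r) \ M_r` and hence in `C_r` by maximality; so `C_r` is closed under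
`[M_r ∩ M_s]`-paths and absorbs every component connected to it.
-/

namespace FinHypergraph

variable {H : FinHypergraph α} {M M' : Finset α}

theorem MAdj.symm {X Y : α} (h : H.MAdj M X Y) : H.MAdj M Y X := by
  obtain ⟨e, he, hX, hY, hXM, hYM⟩ := h
  exact ⟨e, he, hY, hX, hYM, hXM⟩

theorem MAdj.mem_nodes_sdiff {X Y : α} (h : H.MAdj M X Y) : X ∈ H.nodes \ M := by
  obtain ⟨e, he, hX, -, hXM, -⟩ := h
  exact Finset.mem_sdiff.2 ⟨H.edge_sub e he hX, hXM⟩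

theorem MAdj.mono (hM : M' ⊆ M) {X Y : α} (h : H.MAdj M X Y) : H.MAdj M' X Y := by
  obtain ⟨e, he, hX, hY, hXM, hYM⟩ := h
  exact ⟨e, he, hX, hY, fun h => hXM (hM h), fun h => hYM (hM h)⟩

theorem MPath.symm {X Y : α} (h : H.MPath M X Y) : H.MPath M Y X := by
  induction h with
  | refl => exact .refl
  | tail _ hadj ih => exact .head hadj.symm ih

theorem MPath.mono (hM : M' ⊆ M) {X Y : α} (h : H.MPath M X Y) : H.MPath M' X Y :=
  Relation.ReflTransGen.mono (fun _ _ => MAdj.mono hM) _ _ h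

theorem MConn.mono (hM : M' ⊆ M) {W : Finset α} (h : H.MConn M W) : H.MConn M' W :=
  fun X hX Y hY => (h X hX Y hY).mono hM

theorem MComp.notMem_of_mem {C : Finset α} (hC : H.MComp M C) {X : α} (hX : X ∈ C) : X ∉ M :=
  (Finset.mem_sdiff.1 (hC.2.1 hX)).2

theorem MConn.union_of_MAdj {A B : Finset α} (hA : H.MConn M A) (hB : H.MConn M B)
    {a b : α} (ha : a ∈ A) (hb : b ∈ B) (hab : H.MAdj M a b) : H.MConn M (A ∪ B) := by
  intro X hX Y hY
  rcases Finset.mem_union.1 hX with hX | hX <;> rcases Finset.mem_union.1 hY with hY | hY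
  · exact hA X hX Y hY
  · exact ((hA X hX a ha).tail hab).trans (hB b hb Y hY)
  · exact ((hB X hX b hb).tail hab.symm).trans (hA a ha Y hY)
  · exact hB X hX Y hY

theorem MPath.mem_of_closed {S : Finset α} (hS : ∀ X ∈ S, ∀ Y, H.MAdj M X Y → Y ∈ S)
    {X Y : α} (hXY : H.MPath M X Y) (hX : X ∈ S) : Y ∈ S := by
  induction hXY with
  | refl => exact hX
  | tail _ hadj ih => exact hS _ ih _ hadj

theorem MConn.subset_of_closed {A B : Finset α} (hAB : H.MConn M (A ∪ B)) (hA : A.Nonempty)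
    (hclosed : ∀ X ∈ A, ∀ Y, H.MAdj M X Y → Y ∈ A) : B ⊆ A := by
  obtain ⟨Z, hZ⟩ := hA
  intro X hX
  exact (hAB Z (Finset.mem_union_left _ hZ) X (Finset.mem_union_right _ hX)).mem_of_closed
    hclosed hZ

theorem MComp.mem_of_MAdj {C : Finset α} (hC : H.MComp M C) {X Y : α} (hX : X ∈ C)
    (hXY : H.MAdj M X Y) : Y ∈ C := by
  obtain ⟨-, hCsub, hCconn, hCmax⟩ := hC
  have hY : {Y} ⊆ H.nodes \ M := Finset.singleton_subset_iff.2 hXY.symm.mem_nodes_sdiff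
  have hYconn : H.MConn M {Y} := by simp [MConn, MPath, Relation.ReflTransGen.refl]
  have hconn : H.MConn M (C ∪ {Y}) :=
    hCconn.union_of_MAdj hYconn hX (Finset.mem_singleton_self Y) hXY
  rw [← hCmax (C ∪ {Y}) Finset.subset_union_left (Finset.union_subset hCsub hY) hconn]
  exact Finset.mem_union_right _ (Finset.mem_singleton_self Y)

theorem mem_Fr_of_mem_edge {C e : Finset α} (he : e ∈ H.edges) {X Y : α} (hX : X ∈ e)
    (hXC : X ∈ C) (hY : Y ∈ e) : Y ∈ H.Fr C :=
  Finset.le_sup (f := id) (Finset.mem_filter.2 ⟨he, X, Finset.mem_inter.2 ⟨hX, hXC⟩⟩) hY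

theorem exists_edge_of_mem_Fr {C : Finset α} {Y : α} (hY : Y ∈ H.Fr C) :
    ∃ e ∈ H.edges, ∃ X ∈ C, X ∈ e ∧ Y ∈ e := by
  obtain ⟨e, he, hYe⟩ := Finset.mem_sup.1 hY
  obtain ⟨he, X, hX⟩ := Finset.mem_filter.1 he
  exact ⟨e, he, X, (Finset.mem_inter.1 hX).2, (Finset.mem_inter.1 hX).1, hYe⟩

theorem exists_MComp_mem {Z : α} (hZ : Z ∈ H.nodes \ M) : ∃ C, H.MComp M C ∧ Z ∈ C := by
  classical
  have hZC : Z ∈ (H.nodes \ M).filter (H.MPath M Z) := Finset.mem_filter.2 ⟨hZ, .refl⟩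
  refine ⟨_, ⟨⟨Z, hZC⟩, Finset.filter_subset _ _, ?_, ?_⟩, hZC⟩
  · intro X hX Y hY
    exact (Finset.mem_filter.1 hX).2.symm.trans (Finset.mem_filter.1 hY).2
  · intro C' hC' hC'sub hC'conn
    refine Finset.Subset.antisymm (fun Y hY => ?_) hC'
    exact Finset.mem_filter.2 ⟨hC'sub hY, hC'conn Z (hC' hZC) Y hY⟩

theorem exists_escaping_MComp {Mr Cr Ms : Finset α} (hCr : H.MComp Mr Cr) {Z : α}
    (hZ : Z ∈ (Mr ∩ H.Fr Cr) \ Ms) :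
    ∃ C, H.MComp Ms C ∧ H.MConn (Mr ∩ Ms) (Cr ∪ C) ∧ ¬ C ⊆ Cr := by
  obtain ⟨hZMr, hZFr⟩ := Finset.mem_inter.1 (Finset.mem_sdiff.1 hZ).1
  have hZMs := (Finset.mem_sdiff.1 hZ).2
  obtain ⟨e, he, W, hWCr, hWe, hZe⟩ := exists_edge_of_mem_Fr hZFr
  have hWMr : W ∉ Mr := hCr.notMem_of_mem hWCr
  have hWZ : H.MAdj (Mr ∩ Ms) W Z :=
    ⟨e, he, hWe, hZe, fun h => hWMr (Finset.mem_inter.1 h).1,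
      fun h => hZMs (Finset.mem_inter.1 h).2⟩
  have hZnodes : Z ∈ H.nodes \ Ms := Finset.mem_sdiff.2 ⟨H.edge_sub e he hZe, hZMs⟩
  obtain ⟨C, hC, hZC⟩ := exists_MComp_mem hZnodes
  refine ⟨C, hC, ?_, fun hsub => ?_⟩
  · exact (hCr.2.2.1.mono Finset.inter_subset_left).union_of_MAdj
      (hC.2.2.1.mono Finset.inter_subset_right) hWCr hZC hWZ
  · exact hCr.notMem_of_mem (hsub hZC) hZMr

theorem MComp.mem_of_MAdj_inter {Mr Cr Ms : Finset α} (hCr : H.MComp Mr Cr)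
    (hdoor : Mr ∩ H.Fr Cr ⊆ Ms) {X Y : α} (hX : X ∈ Cr) (hXY : H.MAdj (Mr ∩ Ms) X Y) :
    Y ∈ Cr := by
  obtain ⟨e, he, hXe, hYe, -, hY⟩ := hXY
  have hYFr : Y ∈ H.Fr Cr := mem_Fr_of_mem_edge he hXe hX hYe
  have hYMr : Y ∉ Mr := fun hYMr =>
    hY (Finset.mem_inter.2 ⟨hYMr, hdoor (Finset.mem_inter.2 ⟨hYMr, hYFr⟩)⟩)
  exact hCr.mem_of_MAdj hX ⟨e, he, hXe, hYe, hCr.notMem_of_mem hX, hYMr⟩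

end FinHypergraph

theorem monotone_iff_escape_door_empty_general {α : Type} [DecidableEq α] (H1 : FinHypergraph α)
    (Mr Cr Ms : Finset α) (hCr : H1.MComp Mr Cr) :
    (∀ C : Finset α, H1.MComp Ms C → H1.MConn (Mr ∩ Ms) (Cr ∪ C) → C ⊆ Cr) ↔
      (Mr ∩ H1.Fr Cr) \ Ms = ∅ := by
  constructor
  · intro hmono
    by_contra hdoor
    obtain ⟨Z, hZ⟩ := Finset.nonempty_iff_ne_empty.2 hdoor
    obtain ⟨C, hC, hconn, hesc⟩ := FinHypergraph.exists_escaping_MComp hCr hZ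
    exact hesc (hmono C hC hconn)
  · intro hdoor C _ hconn
    exact hconn.subset_of_closed hCr.1
      fun _ hX _ => hCr.mem_of_MAdj_inter (Finset.sdiff_eq_empty_iff_subset.1 hdoor) hX

/-- Let `C_r` be an `[M_r]`-component and `M_s ⊆ Fr(C_r)`. Then every
`[M_s]`-component `C` with `C_r ∪ C` being `[M_r ∩ M_s]`-connected satisfies `C ⊆ C_r` iff
`(M_r ∩ Fr(C_r)) \ M_s = ∅`. -/
theorem monotone_iff_escape_door_empty {α : Type} [DecidableEq α] (H1 : FinHypergraph α)
    (Mr Cr Ms : Finset α) (hCr : H1.MComp Mr Cr) (hMs : Ms ⊆ H1.Fr Cr) :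
    (∀ C : Finset α, H1.MComp Ms C → H1.MConn (Mr ∩ Ms) (Cr ∪ C) → C ⊆ Cr) ↔
      (Mr ∩ H1.Fr Cr) \ Ms = ∅ :=
  monotone_iff_escape_door_empty_general H1 Mr Cr Ms hCr
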